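/- Let F = y⁴ + xzy² + x⁴ − z⁴ ∈ ℂ[x,y,z], F_x = y²z + 4x³, F_z = xy² − 4z³. Let V be the ℂ-span of the eight monomials x²y², xzy², z²y², x⁴, x³z, x²z², xz³, z⁴, and let W be the ℂ-span of x·F_x, z·F_x, x·F_z, z·F_z. Then W ⊆ V, and the images of the four monomials x⁴, x³z, x²z², xz³ form a basis of the quotient vector space V/W; in particular dim_ℂ(V/W) = 4. -/

import Mathlib

/-!
The identities `x·Fx = xzy² + 4x⁴`, `z·Fx = z²y² + 4x³z`, `x·Fz = x²y² − 4xz³`,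
`z·Fz = xzy² − 4z⁴` show both that `W ≤ V` and that, modulo `W`, every monomial of `V`
(the three containing `y²`, and `z⁴`) is a combination of `x⁴, x³z, x²z², xz³`.
For independence, the `y²`-part of `a·xFx + b·zFx + d·xFz + e·zFz` is
`d x² + (a + e) xz + b z²`; if the element lies in the span of the four `y`-free monomials
this vanishes, so `b = d = 0`, `e = −a`, and the `z⁴`-coefficient `−4e` then forces `a = 0`.
-/

open MvPolynomial Submodule Module

theorem Submodule.finrank_quotient_comap_subtype_eq_card
    {K M ι : Type*} [Field K] [AddCommGroup M] [Module K M] [Fintype ι]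
    {V W : Submodule K M} {n : ι → M} (hnV : ∀ i, n i ∈ V)
    (hind : ∀ c : ι → K, ∑ i, c i • n i ∈ W → c = 0)
    (hspan : V ≤ W ⊔ span K (Set.range n)) :
    finrank K (V ⧸ W.comap V.subtype) = Fintype.card ι := by
  let f : (ι → K) →ₗ[K] V ⧸ W.comap V.subtype :=
    (W.comap V.subtype).mkQ ∘ₗ Fintype.linearCombination K (fun i => ⟨n i, hnV i⟩)
  have hf (c : ι → K) : f c = (W.comap V.subtype).mkQ
      ⟨∑ i, c i • n i, sum_mem fun i _ => V.smul_mem _ (hnV i)⟩ := by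
    simp only [f, LinearMap.comp_apply, Fintype.linearCombination_apply]
    congr 1
    ext
    simp
  have hinj : Function.Injective f := by
    rw [← LinearMap.ker_eq_bot, LinearMap.ker_eq_bot']
    intro c hc
    rw [hf, mkQ_apply, Quotient.mk_eq_zero, mem_comap] at hc
    exact hind c hc
  have hsurj : Function.Surjective f := by
    intro q
    obtain ⟨⟨v, hv⟩, rfl⟩ := (W.comap V.subtype).mkQ_surjective q
    obtain ⟨w, hw, s, hs, rfl⟩ := mem_sup.mp (hspan hv)
    obtain ⟨t, rfl⟩ := (mem_span_range_iff_exists_fun K).mp hs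
    refine ⟨t, ?_⟩
    rw [hf, mkQ_apply, mkQ_apply, Quotient.eq, mem_comap]
    simpa using neg_mem hw
  rw [(LinearEquiv.ofBijective f ⟨hinj, hsurj⟩).symm.finrank_eq, Module.finrank_fintype_fun_eq_card]

namespace BiellipticQuartic

noncomputable abbrev Fx : MvPolynomial (Fin 3) ℂ := X 1 ^ 2 * X 2 + 4 * X 0 ^ 3

noncomputable abbrev Fz : MvPolynomial (Fin 3) ℂ := X 0 * X 1 ^ 2 - 4 * X 2 ^ 3

noncomputable abbrev V : Submodule ℂ (MvPolynomial (Fin 3) ℂ) :=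
  span ℂ {X 0 ^ 2 * X 1 ^ 2, X 0 * X 2 * X 1 ^ 2, X 2 ^ 2 * X 1 ^ 2, X 0 ^ 4, X 0 ^ 3 * X 2,
    X 0 ^ 2 * X 2 ^ 2, X 0 * X 2 ^ 3, X 2 ^ 4}

noncomputable abbrev W : Submodule ℂ (MvPolynomial (Fin 3) ℂ) :=
  span ℂ {X 0 * Fx, X 2 * Fx, X 0 * Fz, X 2 * Fz}

noncomputable abbrev n : Fin 4 → MvPolynomial (Fin 3) ℂ :=
  ![X 0 ^ 4, X 0 ^ 3 * X 2, X 0 ^ 2 * X 2 ^ 2, X 0 * X 2 ^ 3]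

theorem W_le_V : W ≤ V := by
  rw [span_le]
  rintro p (rfl | rfl | rfl | rfl)
  · rw [show X 0 * Fx = X 0 * X 2 * X 1 ^ 2 + 4 • X 0 ^ 4 by ring]
    exact add_mem (subset_span (by simp)) (nsmul_mem (subset_span (by simp)) _)
  · rw [show X 2 * Fx = X 2 ^ 2 * X 1 ^ 2 + 4 • (X 0 ^ 3 * X 2) by ring]
    exact add_mem (subset_span (by simp)) (nsmul_mem (subset_span (by simp)) _)
  · rw [show X 0 * Fz = X 0 ^ 2 * X 1 ^ 2 - 4 • (X 0 * X 2 ^ 3) by ring]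
    exact sub_mem (subset_span (by simp)) (nsmul_mem (subset_span (by simp)) _)
  · rw [show X 2 * Fz = X 0 * X 2 * X 1 ^ 2 - 4 • X 2 ^ 4 by ring]
    exact sub_mem (subset_span (by simp)) (nsmul_mem (subset_span (by simp)) _)

theorem n_mem_V (i : Fin 4) : n i ∈ V := by
  fin_cases i <;> exact subset_span (by simp)

theorem V_le_W_sup_span : V ≤ W ⊔ span ℂ (Set.range n) := by
  have memN (i) : n i ∈ W ⊔ span ℂ (Set.range n) := mem_sup_right (subset_span ⟨i, rfl⟩)
  rw [span_le]
  rintro p (rfl | rfl | rfl | rfl | rfl | rfl | rfl | rfl)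
  · rw [show X 0 ^ 2 * X 1 ^ 2 = X 0 * Fz + 4 • (X 0 * X 2 ^ 3) by ring]
    exact add_mem (mem_sup_left (subset_span (by simp))) (nsmul_mem (memN 3) _)
  · rw [show X 0 * X 2 * X 1 ^ 2 = X 0 * Fx - 4 • X 0 ^ 4 by ring]
    exact sub_mem (mem_sup_left (subset_span (by simp))) (nsmul_mem (memN 0) _)
  · rw [show X 2 ^ 2 * X 1 ^ 2 = X 2 * Fx - 4 • (X 0 ^ 3 * X 2) by ring]
    exact sub_mem (mem_sup_left (subset_span (by simp))) (nsmul_mem (memN 1) _)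
  · exact memN 0
  · exact memN 1
  · exact memN 2
  · exact memN 3
  · rw [SetLike.mem_coe, ← smul_mem_iff _ (by norm_num : (4 : ℂ) ≠ 0), ofNat_smul_eq_nsmul ℂ 4,
      show 4 • X 2 ^ 4 = X 0 * Fx - X 2 * Fz - 4 • X 0 ^ 4 by ring]
    exact sub_mem (sub_mem (mem_sup_left (subset_span (by simp))) (mem_sup_left (subset_span (by simp)))) (nsmul_mem (memN 0) _)

theorem eq_zero_of_sum_smul_mem_W (c : Fin 4 → ℂ) (hc : ∑ i, c i • n i ∈ W) : c = 0 := by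
  obtain ⟨a, _, hw₁, h⟩ := mem_span_insert.mp hc
  obtain ⟨b, _, hw₂, rfl⟩ := mem_span_insert.mp hw₁
  obtain ⟨d, _, hw₃, rfl⟩ := mem_span_insert.mp hw₂
  obtain ⟨e, rfl⟩ := mem_span_singleton.mp hw₃
  have at_pt (x y z : ℂ) := congrArg (eval ![x, y, z]) h
  simp only [Fin.sum_univ_four, smul_eq_C_mul, map_add, map_sub, map_mul, map_pow, eval_C, eval_X,
    eval_ofNat, Matrix.cons_val_zero, Matrix.cons_val_one, Matrix.cons_val] at at_pt
  have y_sq_part (x z : ℂ) : d * x ^ 2 + (a + e) * (x * z) + b * z ^ 2 = 0 := by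
    linear_combination at_pt x 0 z - at_pt x 1 z
  have hd : d = 0 := by simpa using y_sq_part 1 0
  have hb : b = 0 := by simpa using y_sq_part 0 1
  have he : e = 0 := by linear_combination (at_pt 0 0 1) / 4
  have ha : a = 0 := by linear_combination y_sq_part 1 1 - hd - hb - he
  subst hd hb he ha
  have binary_quartic (x z : ℂ) :
      c 0 * x ^ 4 + c 1 * (x ^ 3 * z) + c 2 * (x ^ 2 * z ^ 2) + c 3 * (x * z ^ 3) = 0 := by
    simpa using at_pt x 0 z
  have h0 := binary_quartic 1 0
  have h1 := binary_quartic 1 1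
  have hneg := binary_quartic 1 (-1)
  have h2 := binary_quartic 1 2
  norm_num at h0 h1 hneg h2
  ext i
  fin_cases i <;> dsimp
  · linear_combination h0
  · linear_combination (6 * h1 - 2 * hneg - h2 - 3 * h0) / 6
  · linear_combination (h1 + hneg) / 2 - h0
  · linear_combination (h2 + 3 * h0 - 3 * h1 - hneg) / 6

end BiellipticQuartic

/-- With `x = X 0`, `y = X 1`, `z = X 2`, `Fx = y²z + 4x³`, `Fz = xy² − 4z³`:
let `V` be the span of `x²y², xzy², z²y², x⁴, x³z, x²z², xz³, z⁴` and `W` the span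
of `x·Fx, z·Fx, x·Fz, z·Fz`. Then `W ⊆ V` and the images of `x⁴, x³z, x²z², xz³`
form a basis of `V/W`; in particular `dim(V/W) = 4`. -/
theorem bielliptic_tangent_space_dimension
    (Fx Fz : MvPolynomial (Fin 3) ℂ)
    (hFx : Fx = X 1 ^ 2 * X 2 + 4 * X 0 ^ 3)
    (hFz : Fz = X 0 * X 1 ^ 2 - 4 * X 2 ^ 3)
    (V W : Submodule ℂ (MvPolynomial (Fin 3) ℂ))
    (hV : V = Submodule.span ℂ {X 0 ^ 2 * X 1 ^ 2, X 0 * X 2 * X 1 ^ 2,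
      X 2 ^ 2 * X 1 ^ 2, X 0 ^ 4, X 0 ^ 3 * X 2, X 0 ^ 2 * X 2 ^ 2, X 0 * X 2 ^ 3,
      X 2 ^ 4})
    (hW : W = Submodule.span ℂ {X 0 * Fx, X 2 * Fx, X 0 * Fz, X 2 * Fz})
    (n : Fin 4 → MvPolynomial (Fin 3) ℂ)
    (hn : n = ![X 0 ^ 4, X 0 ^ 3 * X 2, X 0 ^ 2 * X 2 ^ 2, X 0 * X 2 ^ 3]) :
    W ≤ V ∧
    (∀ c : Fin 4 → ℂ, (∑ i, c i • n i) ∈ W → c = 0) ∧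
    (V : Set (MvPolynomial (Fin 3) ℂ)) ⊆
      ↑(W ⊔ Submodule.span ℂ (Set.range n)) ∧
    Module.finrank ℂ (↥V ⧸ (W.comap V.subtype)) = 4 := by
  subst hFx hFz hV hW hn
  open BiellipticQuartic in
  exact ⟨W_le_V, eq_zero_of_sum_smul_mem_W, V_le_W_sup_span,
    finrank_quotient_comap_subtype_eq_card n_mem_V eq_zero_of_sum_smul_mem_W V_le_W_sup_span⟩
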